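/- arXiv:2010.02900 — 4 statements merged into one kernel-verified Lean document; each statement's English description precedes it below -/
import Mathlib

section
/- Let H be a finite-dimensional complex inner product space with a self-adjoint involution γ (γ* = γ, γ² = 1), and let D be a self-adjoint operator on H anticommuting with γ (Dγ + γD = 0). Then for every t > 0, Tr(γ · exp(−t D²)) = dim(ker D ∩ H⁺) − dim(ker D ∩ H⁻), where H^± are the ±1 eigenspaces of γ. In particular Tr(γ exp(−tD²)) is independent of t. -/
/-!
Write `P` for the spectral projection of `D` onto `ker D`. Since `exp (-t x²) = 1` at `x = 0`,
the heat operator splits as `exp (-t D²) = P + D² M` with `M` a function of `D`. The supertrace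
of `D² M` vanishes: moving one factor `D` around the trace and past `γ` changes its sign. As `γ`
commutes with `D²`, it commutes with `P`, and then `(1 ± γ) P / 2` are the projections onto
`ker D ∩ H^±`, so `Tr (γ P)` is the difference of their ranks.
-/

open Matrix

namespace LinearMap.IsProj

open Module

variable {K V : Type*} [Field K] [AddCommGroup V] [Module K V] {p : Submodule K V}
  {f γ : Module.End K V}

theorem isProj_smul_add_smul_mul [NeZero (2 : K)] (hf : IsProj p f) (hγ : γ * γ = 1)
    (hc : Commute γ f) {ε : K} (hε : ε * ε = 1) :
    IsProj (p ⊓ ker (γ - ε • 1)) ((2 : K)⁻¹ • (f + ε • (γ * f))) where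
  map_mem x := by
    have hγf : γ (f x) = f (γ x) := LinearMap.congr_fun hc.eq x
    have hγγ : γ (γ (f x)) = f x := LinearMap.congr_fun hγ (f x)
    refine Submodule.mem_inf.mpr ⟨?_, ?_⟩
    · simp only [smul_apply, add_apply, End.mul_apply, hγf]
      exact p.smul_mem _ (p.add_mem (hf.map_mem x) (p.smul_mem _ (hf.map_mem _)))
    · simp only [mem_ker, sub_apply, smul_apply, add_apply, End.mul_apply, End.one_apply,
        map_smul, map_add, hγγ]
      linear_combination (norm := module) (-(2 : K)⁻¹) • hε • γ (f x)
  map_id x hx := by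
    obtain ⟨hxp, hxk⟩ := Submodule.mem_inf.mp hx
    have hγx : γ x = ε • x := by simpa [sub_eq_zero] using hxk
    simp only [smul_apply, add_apply, End.mul_apply, hf.map_id x hxp, hγx, smul_smul, hε]
    rw [one_smul, ← two_smul K x, smul_smul, inv_mul_cancel₀ two_ne_zero, one_smul]

theorem trace_mul_eq_finrank_sub_finrank [NeZero (2 : K)] [FiniteDimensional K V]
    (hf : IsProj p f) (hγ : γ * γ = 1) (hc : Commute γ f) :
    LinearMap.trace K V (γ * f) =
      finrank K ↥(p ⊓ ker (γ - 1)) - finrank K ↥(p ⊓ ker (γ + 1)) := by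
  have hplus := hf.isProj_smul_add_smul_mul hγ hc (one_mul (1 : K))
  have hminus := hf.isProj_smul_add_smul_mul hγ hc (neg_mul_neg (1 : K) 1 ▸ one_mul 1)
  simp only [one_smul, neg_smul, sub_neg_eq_add] at hplus hminus
  rw [← hplus.trace, ← hminus.trace, ← map_sub, ← smul_sub, add_sub_add_left_eq_sub,
    sub_neg_eq_add, ← two_smul K, smul_smul, inv_mul_cancel₀ two_ne_zero, one_smul]

end LinearMap.IsProj

namespace Matrix

theorem trace_mul_mul_self_mul_eq_zero {n R : Type*} [Fintype n] [CommRing R]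
    [NoZeroDivisors R] [CharZero R] {γ D M : Matrix n n R} (hanti : D * γ + γ * D = 0)
    (hM : Commute D M) : (γ * (D * D * M)).trace = 0 := by
  have hDγ : D * γ = -(γ * D) := eq_neg_of_add_eq_zero_left hanti
  rw [← CharZero.eq_neg_self_iff]
  calc (γ * (D * D * M)).trace = (γ * D * M * D).trace := by
        rw [mul_assoc D D M, hM.eq]; simp only [mul_assoc]
    _ = (D * γ * (D * M)).trace := by rw [trace_mul_comm]; simp only [mul_assoc]
    _ = -(γ * (D * D * M)).trace := by rw [hDγ, neg_mul, trace_neg]; simp only [mul_assoc]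

theorem trace_mul_eq_finrank_sub_finrank {n K : Type*} [Fintype n] [DecidableEq n]
    [Field K] [NeZero (2 : K)] {p : Submodule K (n → K)} {γ P : Matrix n n K}
    (hP : LinearMap.IsProj p P.mulVecLin) (hγ : γ * γ = 1) (hc : Commute γ P) :
    (γ * P).trace = Module.finrank K ↥(p ⊓ LinearMap.ker (γ - 1).mulVecLin) -
      Module.finrank K ↥(p ⊓ LinearMap.ker (γ + 1).mulVecLin) := by
  have key := LinearMap.IsProj.trace_mul_eq_finrank_sub_finrank (f := toLinAlgEquiv' P)
    (γ := toLinAlgEquiv' γ) hP (by rw [← map_mul, hγ, map_one]) (hc.map _)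
  rw [← map_one toLinAlgEquiv', ← map_sub, ← map_add, ← map_mul] at key
  rw [← trace_toLin'_eq]
  exact key

variable {n 𝕜 : Type*} [Fintype n] [DecidableEq n] [RCLike 𝕜]

theorem continuousOn_spectrum_real (A : Matrix n n 𝕜) (f : ℝ → ℝ) :
    ContinuousOn f (spectrum ℝ A) :=
  A.finite_real_spectrum.continuousOn f

/-- The spectral projection onto `ker A` (junk value `0` unless `A` is Hermitian). -/
noncomputable def kerProj (A : Matrix n n 𝕜) : Matrix n n 𝕜 :=
  cfc (fun x : ℝ => if x = 0 then 1 else 0) A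

variable {A : Matrix n n 𝕜}

theorem mul_kerProj (hA : A.IsHermitian) : A * kerProj A = 0 := by
  have := hA.isSelfAdjoint
  have hc := A.continuousOn_spectrum_real
  calc A * kerProj A = cfc (fun x : ℝ => x * if x = 0 then 1 else 0) A := by
        rw [cfc_mul (fun x : ℝ => x) _ A (hc _) (hc _), cfc_id' ℝ A, kerProj]
    _ = 0 := by
        rw [← cfc_zero ℝ A]
        refine cfc_congr fun x _ => ?_
        by_cases hx : x = 0 <;> simp [hx]

theorem one_sub_kerProj (hA : A.IsHermitian) :
    1 - kerProj A = cfc (fun x : ℝ => x⁻¹) A * A := by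
  have := hA.isSelfAdjoint
  have hc := A.continuousOn_spectrum_real
  calc 1 - kerProj A = cfc (fun x : ℝ => 1 - if x = 0 then 1 else 0) A := by
        rw [cfc_sub _ _ A (hc _) (hc _), cfc_const_one ℝ A, kerProj]
    _ = cfc (fun x : ℝ => x⁻¹ * x) A := by
        refine cfc_congr fun x _ => ?_
        by_cases hx : x = 0 <;> simp [hx]
    _ = _ := by rw [cfc_mul _ (fun x : ℝ => x) A (hc _) (hc _), cfc_id' ℝ A]

theorem isProj_kerProj (hA : A.IsHermitian) :
    LinearMap.IsProj (LinearMap.ker A.mulVecLin) (kerProj A).mulVecLin where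
  map_mem x := by
    simp [LinearMap.mem_ker, mulVec_mulVec, mul_kerProj hA]
  map_id x hx := by
    rw [LinearMap.mem_ker, mulVecLin_apply] at hx
    have := congr_arg (· *ᵥ x) (one_sub_kerProj hA)
    simp only [sub_mulVec, one_mulVec, ← mulVec_mulVec, hx, mulVec_zero, sub_eq_zero] at this
    exact this.symm

theorem commute_kerProj (hA : A.IsHermitian) {B : Matrix n n 𝕜} (hB : Commute (A * A) B) :
    Commute (kerProj A) B := by
  have := hA.isSelfAdjoint
  have hk : kerProj A = cfc (fun x : ℝ => if x = 0 then 1 else 0) (A ^ 2) := by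
    rw [← cfc_comp_pow _ _ _ ((A.finite_real_spectrum.image _).continuousOn _)]
    simp [kerProj]
  rw [hk]
  exact Commute.cfc_real (sq A ▸ hB) _

theorem cfc_eq_smul_kerProj_add (hA : A.IsHermitian) (f : ℝ → ℝ) :
    cfc f A = f 0 • kerProj A + A * A * cfc (fun x => f x / x ^ 2) A := by
  have := hA.isSelfAdjoint
  have hc := A.continuousOn_spectrum_real
  calc cfc f A = cfc (fun x => f 0 • (if x = 0 then 1 else 0) + x ^ 2 * (f x / x ^ 2)) A := by
        refine cfc_congr fun x _ => ?_
        by_cases hx : x = 0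
        · simp [hx]
        · rw [if_neg hx, smul_zero, zero_add]
          field_simp
    _ = _ := by
        rw [cfc_add A _ _ (hc _) (hc _), cfc_smul _ _ _ (hc _),
          cfc_mul (fun x : ℝ => x ^ 2) _ A (hc _) (hc _), cfc_pow_id A 2, sq, kerProj]

-- `NormedSpace.exp` depends only on the topology, which the L2 operator norm induces; that norm
-- makes the CFC exponential available.
open scoped Matrix.Norms.L2Operator in
theorem exp_smul_mul_self {A : Matrix n n ℂ} (hA : A.IsHermitian) (s : ℝ) :
    NormedSpace.exp (s • (A * A)) = cfc (fun x => Real.exp (s * x ^ 2)) A := by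
  have := hA.isSelfAdjoint
  rw [← sq, ← cfc_pow_id (R := ℝ) A 2, ← cfc_const_mul s _ A, ← CFC.real_exp_eq_normedSpace_exp]
  exact (cfc_comp' Real.exp (fun x => s * x ^ 2) A Real.continuous_exp.continuousOn
    (A.continuousOn_spectrum_real _)).symm

end Matrix

theorem mckean_singer_finite_dim_general {n : ℕ} (γ D : Matrix (Fin n) (Fin n) ℂ)
    (hγ2 : γ * γ = 1)
    (hD : D.IsHermitian) (hanti : D * γ + γ * D = 0)
    (t : ℝ) :
    (γ * NormedSpace.exp ((-t : ℂ) • (D * D))).trace =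
      (Module.finrank ℂ
        ↥(LinearMap.ker D.mulVecLin ⊓ LinearMap.ker (γ - 1).mulVecLin) : ℂ) -
      (Module.finrank ℂ
        ↥(LinearMap.ker D.mulVecLin ⊓ LinearMap.ker (γ + 1).mulVecLin) : ℂ) := by
  have hDγ : D * γ = -(γ * D) := eq_neg_of_add_eq_zero_left hanti
  have hDDγ : Commute (D * D) γ := by
    rw [commute_iff_eq, mul_assoc, hDγ, mul_neg, ← mul_assoc, hDγ, neg_mul, neg_neg, mul_assoc]
  set M := cfc (fun x : ℝ => Real.exp (-t * x ^ 2) / x ^ 2) D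
  have hM : Commute D M := by
    simpa only [cfc_id' ℝ D hD.isSelfAdjoint] using cfc_commute_cfc (fun x : ℝ => x) _ D
  have heat : NormedSpace.exp ((-t : ℂ) • (D * D)) = kerProj D + D * D * M := by
    rw [← Complex.ofReal_neg, Complex.coe_smul, exp_smul_mul_self hD,
      cfc_eq_smul_kerProj_add hD]
    simp only [ne_eq, OfNat.ofNat_ne_zero, not_false_eq_true, zero_pow, mul_zero, Real.exp_zero,
      one_smul, M]
  rw [heat, mul_add, trace_add, trace_mul_mul_self_mul_eq_zero hanti hM, add_zero]
  exact trace_mul_eq_finrank_sub_finrank (isProj_kerProj hD) hγ2 (commute_kerProj hD hDDγ).symm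

/-- **Finite-dimensional McKean–Singer formula.**
`H = ℂⁿ`, `γ` a self-adjoint involution (grading), `D` self-adjoint and odd with
respect to `γ`.  Then for every `t > 0`,
`Tr(γ · exp(−t D²)) = dim(ker D ∩ H⁺) − dim(ker D ∩ H⁻)`,
where `H^± = ker(γ ∓ 1)` are the `±1` eigenspaces of `γ`.  In particular the
left-hand side is independent of `t`. -/
theorem mckean_singer_finite_dim {n : ℕ} (γ D : Matrix (Fin n) (Fin n) ℂ)
    (hγ : γ.IsHermitian) (hγ2 : γ * γ = 1)
    (hD : D.IsHermitian) (hanti : D * γ + γ * D = 0)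
    (t : ℝ) (ht : 0 < t) :
    (γ * NormedSpace.exp ((-t : ℂ) • (D * D))).trace =
      (Module.finrank ℂ
        ↥(LinearMap.ker D.mulVecLin ⊓ LinearMap.ker (γ - 1).mulVecLin) : ℂ) -
      (Module.finrank ℂ
        ↥(LinearMap.ker D.mulVecLin ⊓ LinearMap.ker (γ + 1).mulVecLin) : ℂ) :=
  mckean_singer_finite_dim_general γ D hγ2 hD hanti t
end

section
/- Let P : ℂⁿ → ℂᵐ be a linear map. Then for every real s, Tr((1 + P*P)^{−s}) − Tr((1 + P P*)^{−s}) = dim ker P − dim ker P*. -/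
open scoped Matrix

/-- `A^s` for a Hermitian matrix `A`, defined by the functional calculus
(diagonalization): `A^s = U · diag(λᵢ^s) · U*` where `A = U · diag(λᵢ) · U*`
is the spectral decomposition of `A`. -/
noncomputable def Matrix.IsHermitian.rpow {n : ℕ} {A : Matrix (Fin n) (Fin n) ℂ}
    (hA : A.IsHermitian) (s : ℝ) : Matrix (Fin n) (Fin n) ℂ :=
  (hA.eigenvectorUnitary : Matrix (Fin n) (Fin n) ℂ) *
    Matrix.diagonal (fun i => ((Real.rpow (hA.eigenvalues i) s : ℝ) : ℂ)) *
    star (hA.eigenvectorUnitary : Matrix (Fin n) (Fin n) ℂ)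

private lemma trace_rpow_aux {n : ℕ} {A : Matrix (Fin n) (Fin n) ℂ} (hA : A.IsHermitian) (r : ℝ) :
    (hA.rpow r).trace = ∑ i, ((Real.rpow (hA.eigenvalues i) r : ℝ) : ℂ) := by
  rw [Matrix.IsHermitian.rpow, Matrix.trace_mul_cycle,
    Unitary.coe_star_mul_self, Matrix.one_mul, Matrix.trace_diagonal]

private lemma det_smul_one_sub_aux {n : ℕ} {A : Matrix (Fin n) (Fin n) ℂ} (hA : A.IsHermitian)
    (x : ℂ) :
    (x • (1 : Matrix (Fin n) (Fin n) ℂ) - A).det = ∏ i, (x - (hA.eigenvalues i : ℂ)) := by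
  have hU : (hA.eigenvectorUnitary : Matrix (Fin n) (Fin n) ℂ) *
      star (hA.eigenvectorUnitary : Matrix (Fin n) (Fin n) ℂ) = 1 :=
    Unitary.coe_mul_star_self _
  have key : x • (1 : Matrix (Fin n) (Fin n) ℂ) - A =
      (hA.eigenvectorUnitary : Matrix (Fin n) (Fin n) ℂ) *
        (x • 1 - Matrix.diagonal (RCLike.ofReal ∘ hA.eigenvalues)) *
        star (hA.eigenvectorUnitary : Matrix (Fin n) (Fin n) ℂ) := by
    rw [Matrix.mul_sub, Matrix.sub_mul]
    congr 1
    · rw [Matrix.mul_smul, Matrix.mul_one, Matrix.smul_mul, hU]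
    · exact hA.spectral_theorem
  rw [key, Matrix.det_mul_right_comm, hU, Matrix.one_mul]
  have : x • (1 : Matrix (Fin n) (Fin n) ℂ) - Matrix.diagonal (RCLike.ofReal ∘ hA.eigenvalues)
      = Matrix.diagonal (fun i => x - (hA.eigenvalues i : ℂ)) := by
    ext i j
    rcases eq_or_ne i j with h | h
    · subst h; simp [Matrix.one_apply_eq]
    · simp [Matrix.diagonal_apply_ne _ h, Matrix.one_apply_ne h]
  rw [this, Matrix.det_diagonal]

open Polynomial in
private lemma eig_multiset_aux {n m : ℕ} (P : Matrix (Fin m) (Fin n) ℂ)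
    (h₁ : (1 + Pᴴ * P).IsHermitian) (h₂ : (1 + P * Pᴴ).IsHermitian) :
    Finset.univ.val.map h₁.eigenvalues + Multiset.replicate m (1:ℝ) =
    Finset.univ.val.map h₂.eigenvalues + Multiset.replicate n (1:ℝ) := by
  set a : Multiset ℝ := Finset.univ.val.map h₁.eigenvalues with ha
  set b : Multiset ℝ := Finset.univ.val.map h₂.eigenvalues with hb
  have key : ∀ (x : ℂ), x ≠ 1 →
      (∏ i, (x - (h₁.eigenvalues i : ℂ))) * (x - 1) ^ m =
      (∏ j, (x - (h₂.eigenvalues j : ℂ))) * (x - 1) ^ n := by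
    intro x hx
    set y : ℂ := x - 1 with hy
    have hy0 : y ≠ 0 := sub_ne_zero.mpr hx
    have e1 : x • (1 : Matrix (Fin n) (Fin n) ℂ) - (1 + Pᴴ * P) =
        y • 1 - Pᴴ * P := by
      rw [hy, sub_smul, one_smul, sub_add_eq_sub_sub]
    have e2 : x • (1 : Matrix (Fin m) (Fin m) ℂ) - (1 + P * Pᴴ) =
        y • 1 - P * Pᴴ := by
      rw [hy, sub_smul, one_smul, sub_add_eq_sub_sub]
    have f1 : y • (1 : Matrix (Fin n) (Fin n) ℂ) - Pᴴ * P =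
        y • (1 + ((-(y⁻¹)) • Pᴴ) * P) := by
      rw [smul_add, Matrix.smul_mul, smul_smul, mul_neg, mul_inv_cancel₀ hy0]
      rw [neg_smul, one_smul, sub_eq_add_neg]
    have f2 : y • (1 : Matrix (Fin m) (Fin m) ℂ) - P * Pᴴ =
        y • (1 + P * ((-(y⁻¹)) • Pᴴ)) := by
      rw [smul_add, Matrix.mul_smul, smul_smul, mul_neg, mul_inv_cancel₀ hy0]
      rw [neg_smul, one_smul, sub_eq_add_neg]
    have g1 : (∏ i, (x - (h₁.eigenvalues i : ℂ))) =
        y ^ n * (1 + ((-(y⁻¹)) • Pᴴ) * P).det := by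
      rw [← det_smul_one_sub_aux h₁ x, e1, f1, Matrix.det_smul, Fintype.card_fin]
    have g2 : (∏ j, (x - (h₂.eigenvalues j : ℂ))) =
        y ^ m * (1 + P * ((-(y⁻¹)) • Pᴴ)).det := by
      rw [← det_smul_one_sub_aux h₂ x, e2, f2, Matrix.det_smul, Fintype.card_fin]
    rw [g1, g2, Matrix.det_one_add_mul_comm]
    ring
  have hpoly :
      ((a.map (Complex.ofReal)).map fun t => (X : ℂ[X]) - C t).prod * (X - C 1) ^ m =
      ((b.map (Complex.ofReal)).map fun t => (X : ℂ[X]) - C t).prod * (X - C 1) ^ n := by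
    apply Polynomial.eq_of_infinite_eval_eq
    apply Set.Infinite.mono (s := {(1 : ℂ)}ᶜ) ?_ ((Set.finite_singleton 1).infinite_compl)
    intro x hx
    have hx1 : x ≠ 1 := hx
    simp only [Set.mem_setOf_eq, eval_mul, eval_pow, eval_sub, eval_X, eval_C,
      Polynomial.eval_multiset_prod, Multiset.map_map, Function.comp_def]
    rw [ha, hb, Multiset.map_map, Multiset.map_map, ← Finset.prod_eq_multiset_prod,
      ← Finset.prod_eq_multiset_prod]
    exact key x hx1
  have hroots := congrArg Polynomial.roots hpoly
  have m1 : (((a.map (Complex.ofReal)).map fun t => (X : ℂ[X]) - C t).prod).Monic :=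
    monic_multiset_prod_of_monic _ _ (fun t _ => monic_X_sub_C t)
  have m2 : (((b.map (Complex.ofReal)).map fun t => (X : ℂ[X]) - C t).prod).Monic :=
    monic_multiset_prod_of_monic _ _ (fun t _ => monic_X_sub_C t)
  rw [Polynomial.roots_mul (mul_ne_zero m1.ne_zero (((monic_X_sub_C 1).pow m).ne_zero)),
    Polynomial.roots_mul (mul_ne_zero m2.ne_zero (((monic_X_sub_C 1).pow n).ne_zero)),
    Polynomial.roots_pow, Polynomial.roots_pow, roots_X_sub_C,
    Polynomial.roots_multiset_prod_X_sub_C, Polynomial.roots_multiset_prod_X_sub_C,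
    Multiset.nsmul_singleton, Multiset.nsmul_singleton] at hroots
  apply Multiset.map_injective (f := (Complex.ofReal : ℝ → ℂ)) Complex.ofReal_injective
  simpa [Multiset.map_add, Multiset.map_replicate] using hroots

open scoped ComplexOrder in
private lemma rank_conjTranspose_aux {n m : ℕ} (P : Matrix (Fin m) (Fin n) ℂ) :
    Pᴴ.rank = P.rank :=
  Matrix.rank_conjTranspose P

/-- **ζ-function form of the finite-dimensional index.**
For a linear map `P : ℂⁿ → ℂᵐ` and every real `s`,
`Tr((1 + P*P)^{−s}) − Tr((1 + P P*)^{−s}) = dim ker P − dim ker P*`,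
where the powers of the positive definite Hermitian matrices `1 + P*P` and
`1 + P P*` are defined by the functional calculus. -/
theorem zeta_index_formula {n m : ℕ} (P : Matrix (Fin m) (Fin n) ℂ) (s : ℝ)
    (h₁ : (1 + Pᴴ * P).IsHermitian) (h₂ : (1 + P * Pᴴ).IsHermitian) :
    (h₁.rpow (-s)).trace - (h₂.rpow (-s)).trace =
      (Module.finrank ℂ ↥(LinearMap.ker P.mulVecLin) : ℂ) -
      (Module.finrank ℂ ↥(LinearMap.ker Pᴴ.mulVecLin) : ℂ) := by
  -- the function applied to the eigenvalues
  set f : ℝ → ℂ := fun t => ((Real.rpow t (-s) : ℝ) : ℂ) with hf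
  have f_one : f 1 = 1 := by simp [hf, Real.one_rpow]
  -- LHS = n - m
  have hsum := congrArg (fun M : Multiset ℝ => ((M.map f).sum)) (eig_multiset_aux P h₁ h₂)
  simp only [Multiset.map_add, Multiset.sum_add, Multiset.map_replicate, f_one,
    Multiset.sum_replicate, nsmul_eq_mul, mul_one, Multiset.map_map, Function.comp_def] at hsum
  rw [← Finset.sum_eq_multiset_sum, ← Finset.sum_eq_multiset_sum] at hsum
  have hL : (h₁.rpow (-s)).trace - (h₂.rpow (-s)).trace = (n : ℂ) - (m : ℂ) := by
    rw [trace_rpow_aux, trace_rpow_aux]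
    have : (∑ i, f (h₁.eigenvalues i)) + (m : ℂ) = (∑ j, f (h₂.eigenvalues j)) + (n : ℂ) := hsum
    simp only [hf] at this ⊢
    linear_combination this
  -- RHS = n - m
  have r1 := LinearMap.finrank_range_add_finrank_ker P.mulVecLin
  have r2 := LinearMap.finrank_range_add_finrank_ker Pᴴ.mulVecLin
  rw [Module.finrank_fin_fun, ← Matrix.rank] at r1 r2
  have hr : Pᴴ.rank = P.rank := rank_conjTranspose_aux P
  have c1 : (P.rank : ℂ) + (Module.finrank ℂ ↥(LinearMap.ker P.mulVecLin) : ℂ) = (n : ℂ) := by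
    exact_mod_cast congrArg (Nat.cast : ℕ → ℂ) r1
  have c2 : (Pᴴ.rank : ℂ) + (Module.finrank ℂ ↥(LinearMap.ker Pᴴ.mulVecLin) : ℂ) = (m : ℂ) := by
    exact_mod_cast congrArg (Nat.cast : ℕ → ℂ) r2
  have cr : ((Pᴴ.rank : ℕ) : ℂ) = (P.rank : ℂ) := congrArg (Nat.cast : ℕ → ℂ) hr
  rw [hL]
  linear_combination c2 - c1 - cr
end

section
/- For nonnegative integers m₁, …, m_k, the integral over the standard simplex Δᵏ = {(t₀,…,t_k) : t_i ≥ 0, t₀ + … + t_k = 1} (parametrized by (t₁,…,t_k), with t₀ = 1 − t₁ − … − t_k) satisfies ∫_{Δᵏ} t₀^{m₁} (t₀+t₁)^{m₂} ⋯ (t₀+t₁+⋯+t_{k−1})^{m_k} dt₁ dt₂ ⋯ dt_k = 1 / ((m₁+1)(m₁+m₂+2)(m₁+m₂+m₃+3) ⋯ (m₁+⋯+m_k+k)). -/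
/-!
Write `t₀ = 1 - ∑ i, t i` and let `W_m(t)` be the product in the integrand. The first coordinate
`x` of `t = (x, s)` occurs only in the factor `t₀ = (1 - ∑ s) - x`, so integrating it out of
`t₀ ^ c * W_m` over `0 ≤ x ≤ 1 - ∑ s` leaves `(1 - ∑ s) ^ (c + m₁ + 1) / (c + m₁ + 1)` times
`W_{(m₂, …, m_k)}(s)`, and `1 - ∑ s` is the `t₀` of the smaller simplex. Hence the integrals
`I(c, m) = ∫ t₀ ^ c * W_m` satisfy `I(c, m) = I(c + m₁ + 1, (m₂, …, m_k)) / (c + m₁ + 1)`, and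
the theorem is the case `c = 0` of the resulting closed formula.
-/

open MeasureTheory Finset

theorem Fin.sum_Iic_succ {M : Type*} [AddCommMonoid M] {n : ℕ} (f : Fin (n + 1) → M) (j : Fin n) :
    ∑ i ∈ Iic j.succ, f i = f 0 + ∑ i ∈ Iic j, f i.succ := by
  rw [← bot_eq_zero, ← Finset.Icc_bot, Finset.Icc_eq_cons_Ioc bot_le, Finset.sum_cons,
    bot_eq_zero, ← Fin.map_succEmb_Iic, sum_map]
  rfl

def solidSimplex (ι : Type*) [Fintype ι] : Set (ι → ℝ) :=
  {t | (∀ i, 0 ≤ t i) ∧ ∑ i, t i ≤ 1}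

theorem isCompact_solidSimplex (ι : Type*) [Fintype ι] : IsCompact (solidSimplex ι) := by
  refine Metric.isCompact_of_isClosed_isBounded ?_
    ((Metric.isBounded_Icc (0 : ι → ℝ) 1).subset ?_)
  · simp only [solidSimplex, Set.ofPred_and, Set.ofPred_forall]
    exact (isClosed_iInter fun i => isClosed_le continuous_const (continuous_apply i)).inter
      (isClosed_le (continuous_finsetSum _ fun i _ => continuous_apply i) continuous_const)
  · intro t ⟨ht₀, ht₁⟩
    exact ⟨ht₀, fun i => (single_le_sum (fun j _ => ht₀ j) (mem_univ i)).trans ht₁⟩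

theorem Fin.cons_mem_solidSimplex_iff {n : ℕ} (x : ℝ) (s : Fin n → ℝ) :
    (Fin.cons x s : Fin (n + 1) → ℝ) ∈ solidSimplex (Fin (n + 1)) ↔
      s ∈ solidSimplex (Fin n) ∧ x ∈ Set.Icc 0 (1 - ∑ i, s i) := by
  simp only [solidSimplex, Set.mem_ofPred_eq, Fin.forall_fin_succ, Fin.cons_zero, Fin.cons_succ,
    Fin.sum_cons, Set.mem_Icc]
  constructor
  · rintro ⟨⟨hx, hs⟩, hsum⟩
    exact ⟨⟨hs, by linarith⟩, hx, by linarith⟩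
  · rintro ⟨⟨hs, -⟩, hx, hsum⟩
    exact ⟨⟨hx, hs⟩, by linarith⟩

theorem setIntegral_solidSimplex_succ {n : ℕ} {f : (Fin (n + 1) → ℝ) → ℝ}
    (hf : IntegrableOn f (solidSimplex (Fin (n + 1)))) :
    ∫ t in solidSimplex (Fin (n + 1)), f t =
      ∫ s in solidSimplex (Fin n), ∫ x in Set.Icc 0 (1 - ∑ i, s i), f (Fin.cons x s) := by
  have hS : ∀ k, MeasurableSet (solidSimplex (Fin k)) :=
    fun k => (isCompact_solidSimplex _).isClosed.measurableSet
  have hcons := (volume_preserving_piFinSuccAbove (fun _ : Fin (n + 1) => ℝ) 0).symm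
  have hslice : ∀ s, ∫ x, (solidSimplex (Fin (n + 1))).indicator f (Fin.cons x s) =
      (solidSimplex (Fin n)).indicator
        (fun s => ∫ x in Set.Icc 0 (1 - ∑ i, s i), f (Fin.cons x s)) s := by
    intro s
    by_cases hs : s ∈ solidSimplex (Fin n)
    · rw [Set.indicator_of_mem hs, ← integral_indicator measurableSet_Icc]
      congr 1 with x
      simp only [Set.indicator, Fin.cons_mem_solidSimplex_iff, hs, true_and]
    · simp only [Set.indicator, Fin.cons_mem_solidSimplex_iff, hs, false_and, if_false,
        integral_zero]
  have hcons_apply : ∀ p : ℝ × (Fin n → ℝ),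
      (MeasurableEquiv.piFinSuccAbove (fun _ => ℝ) 0).symm p = Fin.cons p.1 p.2 := by
    intro p
    simp [MeasurableEquiv.piFinSuccAbove_symm_apply, Fin.insertNthEquiv, Fin.insertNth_zero']
  rw [← integral_indicator (hS _), ← hcons.integral_comp', Measure.volume_eq_prod,
    integral_prod_symm]
  · simp only [hcons_apply, hslice, integral_indicator (hS n)]
  · rw [← Measure.volume_eq_prod]
    exact (hcons.integrable_comp_emb (MeasurableEquiv.measurableEmbedding _)).2
      ((integrable_indicator_iff (hS _)).2 hf)

theorem integral_Icc_sub_pow {a : ℝ} (ha : 0 ≤ a) (p : ℕ) :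
    ∫ x in Set.Icc 0 a, (a - x) ^ p = a ^ (p + 1) / (p + 1) := by
  rw [integral_Icc_eq_integral_Ioc, ← intervalIntegral.integral_of_le ha,
    intervalIntegral.integral_comp_sub_left (fun y => y ^ p) a, sub_self, sub_zero, integral_pow,
    zero_pow p.succ_ne_zero, sub_zero]

def simplexWeight {k : ℕ} (m : Fin k → ℕ) (t : Fin k → ℝ) : ℝ :=
  ∏ j, (1 - ∑ i ∈ univ.filter (fun i => j ≤ i), t i) ^ m j

theorem simplexWeight_cons {n : ℕ} (m : Fin (n + 1) → ℕ) (x : ℝ) (s : Fin n → ℝ) :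
    simplexWeight m (Fin.cons x s) =
      (1 - ∑ i, Fin.cons x s i) ^ m 0 * simplexWeight (Fin.tail m) s := by
  rw [simplexWeight, Fin.prod_univ_succ, filter_true_of_mem fun i _ => Fin.zero_le i]
  congr 1
  refine prod_congr rfl fun j _ => ?_
  rw [sum_filter, sum_filter, Fin.sum_univ_succ]
  simp [Fin.succ_le_succ_iff, Fin.tail]

theorem continuous_simplexWeight {k : ℕ} (m : Fin k → ℕ) : Continuous (simplexWeight m) := by
  unfold simplexWeight; fun_prop

theorem setIntegral_solidSimplex_pow_mul_simplexWeight {k : ℕ} (c : ℕ) (m : Fin k → ℕ) :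
    ∫ t in solidSimplex (Fin k), (1 - ∑ i, t i) ^ c * simplexWeight m t =
      (∏ j, (c + ∑ i ∈ Iic j, m i + (j : ℕ) + 1 : ℝ))⁻¹ := by
  induction k generalizing c with
  | zero => simp [solidSimplex, simplexWeight, measureReal_def, volume_pi]
  | succ n ih =>
    have hint : IntegrableOn (fun t => (1 - ∑ i, t i) ^ c * simplexWeight m t)
        (solidSimplex (Fin (n + 1))) :=
      ((by fun_prop : Continuous fun t : Fin (n + 1) → ℝ => (1 - ∑ i, t i) ^ c).mul
        (continuous_simplexWeight m)).continuousOn.integrableOn_compact (isCompact_solidSimplex _)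
    have hinner : ∀ s ∈ solidSimplex (Fin n),
        ∫ x in Set.Icc 0 (1 - ∑ i, s i),
          (1 - ∑ i, (Fin.cons x s : Fin (n + 1) → ℝ) i) ^ c * simplexWeight m (Fin.cons x s) =
        ((c + m 0 + 1 : ℕ) : ℝ)⁻¹ *
          ((1 - ∑ i, s i) ^ (c + m 0 + 1) * simplexWeight (Fin.tail m) s) := by
      intro s hs
      have ha : 0 ≤ 1 - ∑ i, s i := sub_nonneg.2 hs.2
      simp_rw [simplexWeight_cons, Fin.sum_cons, ← mul_assoc, ← pow_add,
        show ∀ x : ℝ, 1 - (x + ∑ i, s i) = (1 - ∑ i, s i) - x from fun x => by ring]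
      rw [integral_mul_const, integral_Icc_sub_pow ha]
      push_cast
      ring
    rw [setIntegral_solidSimplex_succ hint,
      setIntegral_congr_fun (isCompact_solidSimplex _).isClosed.measurableSet hinner,
      integral_const_mul, ih, ← mul_inv, Fin.prod_univ_succ]
    congr 2
    · rw [← bot_eq_zero, Iic_bot, sum_singleton, bot_eq_zero, Fin.val_zero]
      push_cast
      ring
    · refine prod_congr rfl fun j _ => ?_
      rw [Fin.sum_Iic_succ, Fin.val_succ]
      simp only [Fin.tail]
      push_cast
      ring

/-- **The simplex integral computing the constants `C_m` of the Connes–Moscovici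
local index formula.**  For nonnegative integers `m₁, …, m_k`, integrating over the
standard simplex `Δᵏ = {t₀ + ⋯ + t_k = 1, tᵢ ≥ 0}` in the coordinates `(t₁, …, t_k)`
(so `t₀ = 1 − t₁ − ⋯ − t_k` and `t₀ + ⋯ + t_{j-1} = 1 − (t_j + ⋯ + t_k)`),
`∫_{Δᵏ} t₀^{m₁} (t₀+t₁)^{m₂} ⋯ (t₀+⋯+t_{k−1})^{m_k} dt₁ ⋯ dt_k
 = 1 / ((m₁+1)(m₁+m₂+2) ⋯ (m₁+⋯+m_k+k))`.
Here the tuple `t : Fin k → ℝ` lists `(t₁, …, t_k)`, and the `j`-th factor of the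
integrand, `t₀ + ⋯ + t_{j-1}` (raised to the power `m_j`), is written as
`1 − Σ_{i ≥ j} tᵢ`. -/
theorem simplex_integral_CM (k : ℕ) (m : Fin k → ℕ) :
    (∫ t in {t : Fin k → ℝ | (∀ i, 0 ≤ t i) ∧ ∑ i, t i ≤ 1},
        ∏ j : Fin k, (1 - ∑ i ∈ Finset.univ.filter (fun i => j ≤ i), t i) ^ (m j)) =
      (∏ j : Fin k, ((∑ i ∈ Finset.Iic j, m i) + (j : ℕ) + 1 : ℝ))⁻¹ := by
  have h := setIntegral_solidSimplex_pow_mul_simplexWeight 0 m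
  simp only [pow_zero, one_mul, Nat.cast_zero, zero_add] at h
  exact h
end

section
/- Let H be a complex Hilbert space, F a bounded self-adjoint operator with F² = 1, and let A be a unital *-subalgebra of B(H) acting unitally such that [F, a] is trace class for all a ∈ A. For n ≥ 1 define τ(a₀, a₁, …, a_n) = Tr(a₀ [F,a₁] [F,a₂] ⋯ [F,a_n]) whenever n is odd (so that the product of n trace-class commutators with a₀ is trace class). Then τ is a cyclic cochain: τ(a_n, a₀, …, a_{n−1}) = (−1)^n τ(a₀, …, a_n), and τ is a Hochschild cocycle: (bτ)(a₀, …, a_{n+1}) := Σ_{i=0}^{n} (−1)^i τ(a₀, …, a_i a_{i+1}, …, a_{n+1}) + (−1)^{n+1} τ(a_{n+1} a₀, a₁, …, a_n) = 0. -/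
/- Mathlib has no theory of trace-class operators on infinite-dimensional Hilbert
spaces, so we work over a finite-dimensional complex Hilbert space, where every
bounded operator is trace class (hence the trace-class hypothesis of the statement
holds automatically) and the trace is `LinearMap.trace`.  All the algebraic
structure of the statement (cyclicity and the Hochschild cocycle identity for
Connes' character of an odd Fredholm module) is retained verbatim. -/

variable {H : Type*} [NormedAddCommGroup H] [InnerProductSpace ℂ H]
  [FiniteDimensional ℂ H]

/-- The trace of a bounded operator. -/
noncomputable def opTrace (T : H →L[ℂ] H) : ℂ :=
  LinearMap.trace ℂ H (T : H →ₗ[ℂ] H)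

/-- The character cochain of an odd Fredholm module:
`τ(a₀, a₁, …, a_n) = Tr(a₀ [F,a₁] [F,a₂] ⋯ [F,a_n])`. -/
noncomputable def charCochain (F : H →L[ℂ] H) {n : ℕ} (a : Fin (n + 1) → (H →L[ℂ] H)) : ℂ :=
  opTrace (a 0 * (List.ofFn fun i : Fin n => F * a i.succ - a i.succ * F).prod)

/-! Write `ω(b₁,…,b_m) = [F,b₁]⋯[F,b_m]`. Each `[F,b]` anticommutes with `F`, so
`F ω = (-1)^m ω F`; for `m` odd this gives `Tr(x ω) = ½ Tr(F [F,x] ω)` (expand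
`F [F,x] = x - F x F` and move one `F` around the trace), hence
`2 τ(a₀,…,a_n) = Tr(F [F,a₀]⋯[F,a_n])`. Cyclicity follows by carrying `F [F,a_n]` around
the trace past the odd product `[F,a₀]⋯[F,a_{n-1}]`.

For the cocycle identity, the Leibniz rule makes the alternating sum of the faces
`a₀[F,a₁]⋯[F,a_i a_{i+1}]⋯[F,a_{n+1}]` (the `0`-th one being `a₀a₁[F,a₂]⋯`) telescope to
`(-1)^n a₀[F,a₁]⋯[F,a_n] a_{n+1}`, and by the trace property its trace cancels the last
face `τ(a_{n+1}a₀, a₁, …, a_n)`. -/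

theorem Ring.lie_mul {R : Type*} [Ring R] (x y z : R) : ⁅x, y * z⁆ = ⁅x, y⁆ * z + y * ⁅x, z⁆ := by
  simp only [Ring.lie_def]; noncomm_ring

namespace Fin

variable {α : Type*} {m : ℕ}

theorem contractNth_zero (op : α → α → α) (g : Fin (m + 2) → α) :
    contractNth 0 op g = cons (op (g 0) (g 1)) (tail (tail g)) := by
  ext k
  cases k using Fin.cases <;> simp [contractNth, tail]

theorem contractNth_succ (op : α → α → α) (j : Fin (m + 1)) (g : Fin (m + 2) → α) :
    contractNth j.succ op g = cons (g 0) (contractNth j op (tail g)) := by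
  ext k
  cases k using Fin.cases <;> simp [contractNth, tail]

theorem comp_sub_one_eq_cons (a : Fin (m + 1) → α) :
    (fun i => a (i - 1)) = cons (a (last m)) (init a) := by
  ext i
  cases i using Fin.cases with
  | zero => congr 1; ext; simp [coe_neg_one]
  | succ i => congr 1; ext; simp [coe_sub_one, succ_ne_zero]

end Fin

section CommutatorProd

variable {R : Type*} [Ring R] (F : R)

def commutatorProd {m : ℕ} (b : Fin m → R) : R :=
  (List.ofFn fun i => ⁅F, b i⁆).prod

@[simp]
theorem commutatorProd_zero (b : Fin 0 → R) : commutatorProd F b = 1 := rfl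

theorem commutatorProd_succ {m : ℕ} (b : Fin (m + 1) → R) :
    commutatorProd F b = ⁅F, b 0⁆ * commutatorProd F (Fin.tail b) := by
  simp [commutatorProd, List.ofFn_succ, Fin.tail]

@[simp]
theorem commutatorProd_cons {m : ℕ} (x : R) (b : Fin m → R) :
    commutatorProd F (Fin.cons x b) = ⁅F, x⁆ * commutatorProd F b := by
  simp [commutatorProd_succ]

theorem commutatorProd_succ' {m : ℕ} (b : Fin (m + 1) → R) :
    commutatorProd F b = commutatorProd F (Fin.init b) * ⁅F, b (Fin.last m)⁆ := by
  rw [commutatorProd, List.ofFn_succ', List.prod_concat]; rfl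

/-- The alternating sum of the faces of `(a₀, x₀, …, x_m)` with the common left factor `a₀`
stripped off. -/
def commutatorFaceSum {m : ℕ} (x : Fin (m + 1) → R) : R :=
  x 0 * commutatorProd F (Fin.tail x) -
    ∑ i : Fin m, (-1 : ℤ) ^ (i : ℕ) • commutatorProd F (Fin.contractNth i.castSucc (· * ·) x)

theorem commutatorFaceSum_succ {m : ℕ} (x : Fin (m + 2) → R) :
    commutatorFaceSum F x = -(⁅F, x 0⁆ * commutatorFaceSum F (Fin.tail x)) := by
  have hface_zero : x 0 * commutatorProd F (Fin.tail x) -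
      commutatorProd F (Fin.contractNth 0 (· * ·) x) =
      -(⁅F, x 0⁆ * (Fin.tail x 0 * commutatorProd F (Fin.tail (Fin.tail x)))) := by
    rw [Fin.contractNth_zero, commutatorProd_cons, Ring.lie_mul, commutatorProd_succ F (Fin.tail x)]
    simp only [Fin.tail, Fin.succ_zero_eq_one]
    noncomm_ring
  have hface_succ (i : Fin m) :
      (-1 : ℤ) ^ (i.succ : ℕ) • commutatorProd F (Fin.contractNth i.succ.castSucc (· * ·) x) =
      -(⁅F, x 0⁆ * ((-1 : ℤ) ^ (i : ℕ) •
        commutatorProd F (Fin.contractNth i.castSucc (· * ·) (Fin.tail x)))) := by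
    rw [← Fin.succ_castSucc, Fin.contractNth_succ, commutatorProd_cons, Fin.val_succ, pow_succ,
      mul_neg_one, neg_smul, mul_smul_comm]
  simp only [commutatorFaceSum, Fin.sum_univ_succ, Fin.castSucc_zero, Fin.val_zero, pow_zero,
    one_smul, hface_succ, Finset.sum_neg_distrib, ← sub_sub, hface_zero, mul_sub, Finset.mul_sum]
  abel

theorem commutatorFaceSum_eq {m : ℕ} (x : Fin (m + 1) → R) :
    commutatorFaceSum F x = (-1 : ℤ) ^ m • (commutatorProd F (Fin.init x) * x (Fin.last m)) := by
  induction m with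
  | zero => simp [commutatorFaceSum]
  | succ m ih =>
    rw [commutatorFaceSum_succ, ih, commutatorProd_succ F (Fin.init x), Fin.tail_init_eq_init_tail,
      mul_smul_comm, pow_succ, mul_neg_one, neg_smul, mul_assoc]
    rfl

variable {F}

theorem mul_lie_eq_neg (hF : F * F = 1) (x : R) : F * ⁅F, x⁆ = -(⁅F, x⁆ * F) := by
  simp only [Ring.lie_def, mul_sub, sub_mul, ← mul_assoc, hF, one_mul]
  simp only [mul_assoc, hF, mul_one]
  abel

theorem mul_commutatorProd (hF : F * F = 1) {m : ℕ} (b : Fin m → R) :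
    F * commutatorProd F b = (-1 : ℤ) ^ m • (commutatorProd F b * F) := by
  induction m with
  | zero => simp
  | succ m ih =>
    rw [commutatorProd_succ, ← mul_assoc, mul_lie_eq_neg hF, neg_mul, mul_assoc, ih, mul_smul_comm]
    simp [pow_succ, mul_assoc]

end CommutatorProd

section Trace

variable {E : Type*} [NormedAddCommGroup E] [InnerProductSpace ℂ E]

theorem opTrace_mul_comm (A B : E →L[ℂ] E) : opTrace (A * B) = opTrace (B * A) :=
  LinearMap.trace_mul_comm ℂ (A : E →ₗ[ℂ] E) B

theorem opTrace_sub (A B : E →L[ℂ] E) : opTrace (A - B) = opTrace A - opTrace B :=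
  map_sub (LinearMap.trace ℂ E) _ _

theorem opTrace_neg (A : E →L[ℂ] E) : opTrace (-A) = -opTrace A :=
  map_neg (LinearMap.trace ℂ E) _

theorem opTrace_zsmul (k : ℤ) (A : E →L[ℂ] E) : opTrace (k • A) = k * opTrace A := by
  rw [← zsmul_eq_mul]; exact map_zsmul (LinearMap.trace ℂ E) k _

theorem opTrace_sum {ι : Type*} (s : Finset ι) (A : ι → E →L[ℂ] E) :
    opTrace (∑ i ∈ s, A i) = ∑ i ∈ s, opTrace (A i) := by
  simp only [opTrace, ContinuousLinearMap.toLinearMap_sum, map_sum]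

theorem charCochain_eq_opTrace (F : E →L[ℂ] E) {n : ℕ} (a : Fin (n + 1) → E →L[ℂ] E) :
    charCochain F a = opTrace (a 0 * commutatorProd F (Fin.tail a)) := rfl

theorem sum_charCochain_contractNth (F : E →L[ℂ] E) {n : ℕ} (a : Fin (n + 2) → E →L[ℂ] E) :
    ∑ i : Fin (n + 1), (-1 : ℂ) ^ (i : ℕ) * charCochain F (Fin.contractNth i.castSucc (· * ·) a) =
      opTrace (a 0 * commutatorFaceSum F (Fin.tail a)) := by
  simp only [Fin.sum_univ_succ, Fin.castSucc_zero, ← Fin.succ_castSucc, Fin.contractNth_zero,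
    Fin.contractNth_succ, charCochain_eq_opTrace, Fin.cons_zero, Fin.tail_cons, commutatorFaceSum,
    mul_sub, Finset.mul_sum, mul_smul_comm, opTrace_sub, opTrace_sum, opTrace_zsmul, Fin.val_zero,
    Fin.val_succ, pow_zero, pow_succ, one_mul, mul_assoc]
  push_cast
  simp only [neg_one_mul, mul_neg, Finset.sum_neg_distrib, ← sub_eq_add_neg]
  rfl

variable {F : E →L[ℂ] E}

theorem opTrace_mul_lie_mul (hF : F * F = 1) (x : E →L[ℂ] E) {y : E →L[ℂ] E}
    (hy : F * y = -(y * F)) : opTrace (F * ⁅F, x⁆ * y) = 2 * opTrace (x * y) := by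
  have hyF : F * y * F = -y := by rw [hy, neg_mul, mul_assoc, hF, mul_one]
  have hexpand : F * ⁅F, x⁆ * y = x * y - F * (x * F * y) := by
    simp only [Ring.lie_def, mul_sub, sub_mul, ← mul_assoc, hF, one_mul]
  rw [hexpand, opTrace_sub, opTrace_mul_comm F, mul_assoc, mul_assoc, ← mul_assoc F, hyF, mul_neg,
    opTrace_neg]
  ring

theorem two_mul_charCochain (hF : F * F = 1) {n : ℕ} (hn : Odd n) (a : Fin (n + 1) → E →L[ℂ] E) :
    2 * charCochain F a = opTrace (F * commutatorProd F a) := by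
  have hanti : F * commutatorProd F (Fin.tail a) = -(commutatorProd F (Fin.tail a) * F) := by
    rw [mul_commutatorProd hF, hn.neg_one_pow, neg_one_smul]
  rw [charCochain_eq_opTrace, ← opTrace_mul_lie_mul hF _ hanti, commutatorProd_succ, mul_assoc]

theorem charCochain_comp_sub_one (hF : F * F = 1) {n : ℕ} (hn : Odd n)
    (a : Fin (n + 1) → E →L[ℂ] E) :
    charCochain F (fun i => a (i - 1)) = -charCochain F a := by
  have hanti : commutatorProd F (Fin.init a) * F = -(F * commutatorProd F (Fin.init a)) := by
    rw [mul_commutatorProd hF, hn.neg_one_pow, neg_one_smul, neg_neg]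
  have htwo : 2 * charCochain F (fun i => a (i - 1)) = -(2 * charCochain F a) := by
    rw [two_mul_charCochain hF hn, two_mul_charCochain hF hn, Fin.comp_sub_one_eq_cons,
      commutatorProd_cons, ← mul_assoc, opTrace_mul_comm, ← mul_assoc, hanti, neg_mul, opTrace_neg,
      mul_assoc, ← commutatorProd_succ']
  linear_combination htwo / 2

end Trace

theorem connes_character_odd_cyclic_cocycle_general (F : H →L[ℂ] H)
    (hF2 : F * F = 1) (n : ℕ) (hn : Odd n) :
    (∀ a : Fin (n + 1) → (H →L[ℂ] H),
      charCochain F (fun i => a (i - 1)) = (-1 : ℂ) ^ n * charCochain F a) ∧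
    (∀ a : Fin (n + 2) → (H →L[ℂ] H),
      (∑ i : Fin (n + 1), (-1 : ℂ) ^ (i : ℕ) *
          charCochain F (fun j : Fin (n + 1) =>
            if (j : ℕ) < (i : ℕ) then a j.castSucc
            else if j = i then a i.castSucc * a i.succ
            else a j.succ))
        + (-1 : ℂ) ^ (n + 1) *
          charCochain F (fun j : Fin (n + 1) =>
            if j = 0 then a (Fin.last (n + 1)) * a 0 else a j.castSucc) = 0) := by
  refine ⟨fun a => by rw [charCochain_comp_sub_one hF2 hn, hn.neg_one_pow, neg_one_mul],
    fun a => ?_⟩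
  have hfaces (i : Fin (n + 1)) : (fun j : Fin (n + 1) =>
      if (j : ℕ) < (i : ℕ) then a j.castSucc
      else if j = i then a i.castSucc * a i.succ
      else a j.succ) = Fin.contractNth i.castSucc (· * ·) a := by
    funext j
    by_cases hji : j = i
    · subst hji; simp [Fin.contractNth]
    · simp [Fin.contractNth, hji, Fin.val_inj]
  have hlast : charCochain F (fun j : Fin (n + 1) =>
      if j = 0 then a (Fin.last (n + 1)) * a 0 else a j.castSucc) =
      opTrace (a 0 * (commutatorProd F (Fin.init (Fin.tail a)) * a (Fin.last (n + 1)))) := by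
    have htail : Fin.tail (fun j : Fin (n + 1) =>
        if j = 0 then a (Fin.last (n + 1)) * a 0 else a j.castSucc) = Fin.init (Fin.tail a) := by
      funext j; simp [Fin.tail, Fin.init, Fin.succ_ne_zero]
    rw [charCochain_eq_opTrace, htail, if_pos rfl, mul_assoc, opTrace_mul_comm, mul_assoc]
  simp only [hfaces, sum_charCochain_contractNth, commutatorFaceSum_eq, hlast, mul_smul_comm,
    opTrace_zsmul, Fin.tail, Fin.succ_last]
  push_cast
  ring

/-- **Connes' character of an odd Fredholm module is a cyclic Hochschild cocycle.**
Let `F` be self-adjoint with `F² = 1` and `n` odd.  Then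
`τ(a₀,…,a_n) = Tr(a₀[F,a₁]⋯[F,a_n])` satisfies the cyclic symmetry
`τ(a_n, a₀, …, a_{n−1}) = (−1)^n τ(a₀, …, a_n)` and the cocycle identity
`(bτ)(a₀,…,a_{n+1}) = Σ_{i=0}^{n} (−1)^i τ(a₀,…,a_i a_{i+1},…,a_{n+1})
  + (−1)^{n+1} τ(a_{n+1}a₀, a₁,…,a_n) = 0`. -/
theorem connes_character_odd_cyclic_cocycle (F : H →L[ℂ] H)
    (hF : IsSelfAdjoint F) (hF2 : F * F = 1) (n : ℕ) (hn : Odd n) :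
    (∀ a : Fin (n + 1) → (H →L[ℂ] H),
      charCochain F (fun i => a (i - 1)) = (-1 : ℂ) ^ n * charCochain F a) ∧
    (∀ a : Fin (n + 2) → (H →L[ℂ] H),
      (∑ i : Fin (n + 1), (-1 : ℂ) ^ (i : ℕ) *
          charCochain F (fun j : Fin (n + 1) =>
            if (j : ℕ) < (i : ℕ) then a j.castSucc
            else if j = i then a i.castSucc * a i.succ
            else a j.succ))
        + (-1 : ℂ) ^ (n + 1) *
          charCochain F (fun j : Fin (n + 1) =>
            if j = 0 then a (Fin.last (n + 1)) * a 0 else a j.castSucc) = 0) :=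
  connes_character_odd_cyclic_cocycle_general F hF2 n hn
end
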